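/- Let ν be a Lévy measure with tail ν̄ and let T > 0. If f is Lipschitz continuous on [0,T], then the function t ↦ ∫_0^t ν̄(t−s)(f(s) − f(0)) ds is differentiable at every t ∈ [0,T], the identity ∂_t^Φ f(t) = ∫_0^t ν̄(t−s) f′(s) ds holds for every t ∈ [0,T], and the function t ↦ ∂_t^Φ f(t) is continuous on [0,T]. -/

import Mathlib

/-!
Write `g = ν̄ ⋆ (f - f 0)` and `h = ν̄ ⋆ f'` for the finite convolution
`(k ⋆ φ)(t) = ∫₀ᵗ k(t - s) φ(s) ds`. Since `f - f 0` is the primitive of `f'`, Fubini on the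
triangle `0 < u ≤ s ≤ τ` turns both `g τ` and `∫₀^τ h` into `∫₀^τ (∫₀^{τ-u} ν̄) f'(u) du`, so `g`
is a primitive of `h`. The tail `ν̄` is nonnegative, nonincreasing on `(0, ∞)` and integrable
near `0` (by the layer-cake formula `∫₀ᵀ ν̄ = ∫ min(x, T) ν(dx)`), and `|f'| ≤ K`; hence
`|h t' - h t| ≤ 2K ∫₀^{t'-t} ν̄`, so `h` is continuous and the fundamental theorem of calculus
gives the derivative of `g`.
-/

open MeasureTheory Set

/-- The tail of a Lévy measure: `ν̄(s) = ν((s,∞))`. -/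
noncomputable def nubar (ν : Measure ℝ) (s : ℝ) : ℝ := (ν (Set.Ioi s)).toReal

/-- A Lévy measure on `(0,∞)`: it gives no mass to `(-∞,0]` and integrates `min(s,1)`. -/
def IsLevyMeasure (ν : Measure ℝ) : Prop :=
  ν (Set.Iic 0) = 0 ∧ ∫⁻ s in Set.Ioi (0:ℝ), ENNReal.ofReal (min s 1) ∂ν ≠ ⊤

open Filter Topology
open scoped ENNReal NNReal

lemma nubar_nonneg (ν : Measure ℝ) (s : ℝ) : 0 ≤ nubar ν s := ENNReal.toReal_nonneg

namespace IsLevyMeasure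

variable {ν : Measure ℝ}

lemma measure_Ioi_lt_top (hν : IsLevyMeasure ν) {ε : ℝ} (hε : 0 < ε) : ν (Ioi ε) < ∞ := by
  have hc : ENNReal.ofReal (min ε 1) ≠ 0 := by simp [hε]
  have hsub : Ioi ε ⊆ {x | ENNReal.ofReal (min ε 1) ≤ ENNReal.ofReal (min x 1)} ∩ Ioi 0 :=
    fun x hx => ⟨ENNReal.ofReal_le_ofReal (min_le_min_right 1 hx.le), hε.trans hx⟩
  have hmarkov := mul_meas_ge_le_lintegral₀ (μ := ν.restrict (Ioi 0))
    (f := fun s => ENNReal.ofReal (min s 1)) (by fun_prop) (ENNReal.ofReal (min ε 1))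
  rw [Measure.restrict_apply' measurableSet_Ioi] at hmarkov
  calc ν (Ioi ε) ≤ (∫⁻ s in Ioi 0, ENNReal.ofReal (min s 1) ∂ν) / ENNReal.ofReal (min ε 1) := by
        rw [ENNReal.le_div_iff_mul_le (Or.inl hc) (Or.inl ENNReal.ofReal_ne_top), mul_comm]
        exact (mul_le_mul_right (measure_mono hsub) _).trans hmarkov
    _ < ∞ := ENNReal.div_lt_top hν.2 hc

lemma antitoneOn_nubar (hν : IsLevyMeasure ν) : AntitoneOn (nubar ν) (Ioi 0) :=
  fun _ ha _ _ hab =>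
    ENNReal.toReal_mono (hν.measure_Ioi_lt_top ha).ne (measure_mono (Ioi_subset_Ioi hab))

lemma integrableOn_nubar (hν : IsLevyMeasure ν) (T : ℝ) : IntegrableOn (nubar ν) (Icc 0 T) := by
  rcases lt_or_ge T 0 with hT | hT
  · simp [Icc_eq_empty_of_lt hT]
  have hmeas : Measurable (nubar ν) :=
    ENNReal.measurable_toReal.comp
      (Antitone.measurable fun _ _ hab => measure_mono (Ioi_subset_Ioi hab))
  rw [integrableOn_Icc_iff_integrableOn_Ioo]
  refine ⟨hmeas.aestronglyMeasurable, ?_⟩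
  have hlayer := lintegral_eq_lintegral_meas_lt (ν.restrict (Ioi 0)) (f := fun x => min x T)
    ((ae_restrict_mem measurableSet_Ioi).mono fun x hx => le_min (mem_Ioi.1 hx).le hT)
    (by fun_prop)
  have hslice : ∀ s ∈ Ioo 0 T, ν (Ioi s) = ν.restrict (Ioi 0) {x | s < min x T} := by
    intro s hs
    rw [Measure.restrict_apply' measurableSet_Ioi]
    congr 1
    ext x
    simp only [mem_Ioi, mem_inter_iff, mem_ofPred_eq, lt_min_iff, hs.2, and_true]
    exact ⟨fun hx => ⟨hx, hs.1.trans hx⟩, And.left⟩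
  have hmin : ∀ x ∈ Ioi (0 : ℝ),
      ENNReal.ofReal (min x T) ≤ ENNReal.ofReal (max 1 T) * ENNReal.ofReal (min x 1) := by
    intro x hx
    rw [← ENNReal.ofReal_mul (zero_le_one.trans (le_max_left 1 T))]
    refine ENNReal.ofReal_le_ofReal ?_
    rcases le_total x 1 with h | h
    · rw [min_eq_left h]
      nlinarith [min_le_left x T, le_max_left 1 T, mem_Ioi.1 hx]
    · rw [min_eq_right h, mul_one]
      exact (min_le_right x T).trans (le_max_right 1 T)
  calc ∫⁻ s in Ioo 0 T, ‖nubar ν s‖ₑ ≤ ∫⁻ s in Ioo 0 T, ν (Ioi s) :=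
        lintegral_mono fun s => by
          rw [Real.enorm_of_nonneg (nubar_nonneg ν s)]; exact ENNReal.ofReal_toReal_le
    _ = ∫⁻ s in Ioo 0 T, ν.restrict (Ioi 0) {x | s < min x T} :=
        setLIntegral_congr_fun measurableSet_Ioo hslice
    _ ≤ ∫⁻ s in Ioi 0, ν.restrict (Ioi 0) {x | s < min x T} :=
        lintegral_mono_set Ioo_subset_Ioi_self
    _ = ∫⁻ x in Ioi 0, ENNReal.ofReal (min x T) ∂ν := hlayer.symm
    _ ≤ ∫⁻ x in Ioi 0, ENNReal.ofReal (max 1 T) * ENNReal.ofReal (min x 1) ∂ν :=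
        setLIntegral_mono (by fun_prop) hmin
    _ = ENNReal.ofReal (max 1 T) * ∫⁻ x in Ioi 0, ENNReal.ofReal (min x 1) ∂ν :=
        lintegral_const_mul' _ _ ENNReal.ofReal_ne_top
    _ < ∞ := ENNReal.mul_lt_top ENNReal.ofReal_lt_top hν.2.lt_top

end IsLevyMeasure

noncomputable def laplaceConv (k φ : ℝ → ℝ) (t : ℝ) : ℝ := ∫ s in 0..t, k (t - s) * φ s

lemma measurableSet_triangle (a b : ℝ) :
    MeasurableSet {p : ℝ × ℝ | a < p.2 ∧ p.2 ≤ p.1 ∧ p.1 ≤ b} :=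
  (measurableSet_lt measurable_const measurable_snd).inter
    ((measurableSet_le measurable_snd measurable_fst).inter
      (measurableSet_le measurable_fst measurable_const))

theorem integral_integral_swap_triangle {F : ℝ × ℝ → ℝ} {a b : ℝ} (hab : a ≤ b)
    (hF : IntegrableOn F {p | a < p.2 ∧ p.2 ≤ p.1 ∧ p.1 ≤ b}) :
    ∫ s in a..b, ∫ u in a..s, F (s, u) = ∫ u in a..b, ∫ s in u..b, F (s, u) := by
  set S := {p : ℝ × ℝ | a < p.2 ∧ p.2 ≤ p.1 ∧ p.1 ≤ b}
  have hI : Integrable (S.indicator F) (volume.prod volume) :=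
    (integrable_indicator_iff (measurableSet_triangle a b)).2 hF
  have hslice_s : ∀ s, ∫ u, S.indicator F (s, u) =
      (Ioc a b).indicator (fun s => ∫ u in a..s, F (s, u)) s := by
    intro s
    by_cases hs : s ∈ Ioc a b
    · rw [indicator_of_mem hs, intervalIntegral.integral_of_le hs.1.le,
        ← integral_indicator measurableSet_Ioc]
      congr 1 with u
      simp only [S, indicator_apply, mem_ofPred_eq, mem_Ioc, hs.2, and_true]
    · rw [indicator_of_notMem hs, ← integral_zero ℝ ℝ]
      congr 1 with u
      refine indicator_of_notMem (fun hu => hs ⟨hu.1.trans_le hu.2.1, hu.2.2⟩) _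
  have hslice_u : ∀ u, ∫ s, S.indicator F (s, u) =
      (Ioc a b).indicator (fun u => ∫ s in u..b, F (s, u)) u := by
    intro u
    by_cases hu : u ∈ Ioc a b
    · rw [indicator_of_mem hu, intervalIntegral.integral_of_le hu.2,
        ← integral_Icc_eq_integral_Ioc, ← integral_indicator measurableSet_Icc]
      congr 1 with s
      simp only [S, indicator_apply, mem_ofPred_eq, mem_Icc, hu.1, true_and]
    · rw [indicator_of_notMem hu, ← integral_zero ℝ ℝ]
      congr 1 with s
      refine indicator_of_notMem (fun hs => hu ⟨hs.1, hs.2.1.trans hs.2.2⟩) _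
  calc ∫ s in a..b, ∫ u in a..s, F (s, u)
      = ∫ s, ∫ u, S.indicator F (s, u) := by
        rw [intervalIntegral.integral_of_le hab, ← integral_indicator measurableSet_Ioc]
        simp_rw [hslice_s]
    _ = ∫ u, ∫ s, S.indicator F (s, u) := (integral_prod _ hI).symm.trans (integral_prod_symm _ hI)
    _ = ∫ u in a..b, ∫ s in u..b, F (s, u) := by
        rw [intervalIntegral.integral_of_le hab, ← integral_indicator measurableSet_Ioc]
        simp_rw [hslice_u]

section Fubini

variable {k φ : ℝ → ℝ} {τ : ℝ}

lemma integrableOn_triangle_kernel_mul (hk : IntegrableOn k (Icc 0 τ))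
    (hφ : IntegrableOn φ (Icc 0 τ)) :
    IntegrableOn (fun p : ℝ × ℝ => k (τ - p.1) * φ p.2) {p | 0 < p.2 ∧ p.2 ≤ p.1 ∧ p.1 ≤ τ} := by
  have hprod : Integrable (fun p : ℝ × ℝ => (Icc 0 τ).indicator k (τ - p.1) *
      (Icc 0 τ).indicator φ p.2) (volume.prod volume) :=
    (((integrable_indicator_iff measurableSet_Icc).2 hk).comp_sub_left τ).mul_prod
      ((integrable_indicator_iff measurableSet_Icc).2 hφ)
  refine hprod.integrableOn.congr_fun (fun p ⟨h0, h1, h2⟩ => ?_) (measurableSet_triangle 0 τ)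
  dsimp only
  rw [indicator_of_mem (show τ - p.1 ∈ Icc 0 τ from ⟨by linarith, by linarith⟩),
    indicator_of_mem (show p.2 ∈ Icc 0 τ from ⟨h0.le, by linarith⟩)]

lemma integrableOn_triangle_conv (hk : IntegrableOn k (Icc 0 τ))
    (hφ : IntegrableOn φ (Icc 0 τ)) :
    IntegrableOn (fun p : ℝ × ℝ => k (p.1 - p.2) * φ p.2) {p | 0 < p.2 ∧ p.2 ≤ p.1 ∧ p.1 ≤ τ} := by
  have hconv := ((integrable_indicator_iff measurableSet_Icc).2 hφ).convolution_integrand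
    (ContinuousLinearMap.mul ℝ ℝ) ((integrable_indicator_iff measurableSet_Icc).2 hk)
    (μ := volume) (ν := volume)
  refine hconv.integrableOn.congr_fun (fun p ⟨h0, h1, h2⟩ => ?_) (measurableSet_triangle 0 τ)
  dsimp only
  rw [ContinuousLinearMap.mul_apply',
    indicator_of_mem (show p.2 ∈ Icc 0 τ from ⟨h0.le, by linarith⟩),
    indicator_of_mem (show p.1 - p.2 ∈ Icc 0 τ from ⟨by linarith, by linarith⟩), mul_comm]

theorem laplaceConv_primitive_eq_integral_laplaceConv (hτ : 0 ≤ τ)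
    (hk : IntegrableOn k (Icc 0 τ)) (hφ : IntegrableOn φ (Icc 0 τ)) :
    laplaceConv k (fun s => ∫ u in 0..s, φ u) τ = ∫ r in 0..τ, laplaceConv k φ r := by
  calc laplaceConv k (fun s => ∫ u in 0..s, φ u) τ
      = ∫ s in 0..τ, ∫ u in 0..s, k (τ - s) * φ u := by
        simp only [laplaceConv, intervalIntegral.integral_const_mul]
    _ = ∫ u in 0..τ, (∫ v in 0..τ - u, k v) * φ u := by
        rw [integral_integral_swap_triangle hτ (integrableOn_triangle_kernel_mul hk hφ)]
        congr 1 with u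
        dsimp only
        rw [intervalIntegral.integral_mul_const, intervalIntegral.integral_comp_sub_left, sub_self]
    _ = ∫ r in 0..τ, ∫ u in 0..r, k (r - u) * φ u := by
        rw [integral_integral_swap_triangle hτ (integrableOn_triangle_conv hk hφ)]
        congr 1 with u
        dsimp only
        rw [intervalIntegral.integral_mul_const, intervalIntegral.integral_comp_sub_right, sub_self]

end Fubini

section Continuity

variable {k φ : ℝ → ℝ} {T : ℝ} {C : ℝ≥0}

lemma intervalIntegrable_of_integrableOn_Icc (hk : IntegrableOn k (Icc 0 T)) {a b : ℝ}
    (ha : 0 ≤ a) (hab : a ≤ b) (hbT : b ≤ T) : IntervalIntegrable k volume a b :=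
  (hk.mono_set (by rw [uIcc_of_le hab]; exact Icc_subset_Icc ha hbT)).intervalIntegrable

lemma intervalIntegrable_kernel (hk : IntegrableOn k (Icc 0 T)) {a b c : ℝ} (ha : 0 ≤ a)
    (hab : a ≤ b) (hbc : b ≤ c) (hcT : c ≤ T) :
    IntervalIntegrable (fun s => k (c - s)) volume a b := by
  simpa using ((intervalIntegrable_of_integrableOn_Icc hk (a := c - b) (b := c - a)
    (by linarith) (by linarith) (by linarith)).comp_sub_left c).symm

lemma intervalIntegrable_kernel_mul (hk : IntegrableOn k (Icc 0 T))
    (hφ : IntegrableOn φ (Icc 0 T)) (hφC : ∀ᵐ s ∂volume.restrict (Icc 0 T), |φ s| ≤ C)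
    {a b c : ℝ} (ha : 0 ≤ a) (hab : a ≤ b) (hbc : b ≤ c) (hcT : c ≤ T) :
    IntervalIntegrable (fun s => k (c - s) * φ s) volume a b := by
  have hsub : Ioc a b ⊆ Icc 0 T := fun s hs => ⟨ha.trans hs.1.le, hs.2.trans (hbc.trans hcT)⟩
  have hkc := intervalIntegrable_kernel hk ha hab hbc hcT
  rw [intervalIntegrable_iff_integrableOn_Ioc_of_le hab] at hkc ⊢
  exact hkc.mul_bdd (hφ.mono_set hsub).aestronglyMeasurable
    (ae_restrict_of_ae_restrict_of_subset hsub hφC)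

lemma abs_integral_kernel_mul_le (hk0 : ∀ x, 0 ≤ k x) (hk : IntegrableOn k (Icc 0 T))
    (hφC : ∀ᵐ s ∂volume.restrict (Icc 0 T), |φ s| ≤ C) {t t' : ℝ} (ht : 0 ≤ t) (htt' : t ≤ t')
    (ht'T : t' ≤ T) :
    |∫ s in t..t', k (t' - s) * φ s| ≤ C * ∫ x in 0..t' - t, k x := by
  have hbound : ∀ᵐ s, s ∈ Ioc t t' → ‖k (t' - s) * φ s‖ ≤ C * k (t' - s) := by
    filter_upwards [(ae_restrict_iff' measurableSet_Icc).1 hφC] with s hs hst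
    rw [Real.norm_eq_abs, abs_mul, abs_of_nonneg (hk0 _), mul_comm]
    exact mul_le_mul_of_nonneg_right (hs ⟨ht.trans hst.1.le, hst.2.trans ht'T⟩) (hk0 _)
  calc |∫ s in t..t', k (t' - s) * φ s| ≤ ∫ s in t..t', C * k (t' - s) :=
        intervalIntegral.norm_integral_le_of_norm_le htt' hbound
          ((intervalIntegrable_kernel hk ht htt' le_rfl ht'T).const_mul _)
    _ = C * ∫ x in 0..t' - t, k x := by
        rw [intervalIntegral.integral_const_mul, intervalIntegral.integral_comp_sub_left, sub_self]

lemma abs_integral_kernel_sub_mul_le (hk0 : ∀ x, 0 ≤ k x) (hk_anti : AntitoneOn k (Ioi 0))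
    (hk : IntegrableOn k (Icc 0 T)) (hφC : ∀ᵐ s ∂volume.restrict (Icc 0 T), |φ s| ≤ C)
    {t t' : ℝ} (ht : 0 ≤ t) (htt' : t ≤ t') (ht'T : t' ≤ T) :
    |∫ s in 0..t, (k (t' - s) - k (t - s)) * φ s| ≤ C * ∫ x in 0..t' - t, k x := by
  have hkt := intervalIntegrable_kernel hk le_rfl ht le_rfl (htt'.trans ht'T)
  have hkt' := intervalIntegrable_kernel hk le_rfl ht htt' ht'T
  have hbound : ∀ᵐ s, s ∈ Ioc 0 t →
      ‖(k (t' - s) - k (t - s)) * φ s‖ ≤ C * (k (t - s) - k (t' - s)) := by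
    filter_upwards [(ae_restrict_iff' measurableSet_Icc).1 hφC, Measure.ae_ne volume t]
      with s hs hne hst
    have hst' : s < t := lt_of_le_of_ne hst.2 hne
    have hmono : k (t' - s) ≤ k (t - s) :=
      hk_anti (sub_pos.2 hst') (sub_pos.2 (hst'.trans_le htt')) (by linarith)
    rw [Real.norm_eq_abs, abs_mul, abs_sub_comm, abs_of_nonneg (sub_nonneg.2 hmono), mul_comm]
    exact mul_le_mul_of_nonneg_right (hs ⟨hst.1.le, hst.2.trans (htt'.trans ht'T)⟩)
      (sub_nonneg.2 hmono)
  have hsplit₁ := intervalIntegral.integral_add_adjacent_intervals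
    (intervalIntegrable_of_integrableOn_Icc hk le_rfl ht (htt'.trans ht'T))
    (intervalIntegrable_of_integrableOn_Icc hk ht htt' ht'T)
  have hsplit₂ := intervalIntegral.integral_add_adjacent_intervals
    (intervalIntegrable_of_integrableOn_Icc hk le_rfl (sub_nonneg.2 htt') (by linarith))
    (intervalIntegrable_of_integrableOn_Icc hk (sub_nonneg.2 htt') (by linarith) ht'T)
  calc |∫ s in 0..t, (k (t' - s) - k (t - s)) * φ s|
      ≤ ∫ s in 0..t, C * (k (t - s) - k (t' - s)) :=
        intervalIntegral.norm_integral_le_of_norm_le ht hbound ((hkt.sub hkt').const_mul _)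
    _ = C * ((∫ x in 0..t' - t, k x) - ∫ x in t..t', k x) := by
        rw [intervalIntegral.integral_const_mul, intervalIntegral.integral_sub hkt hkt',
          intervalIntegral.integral_comp_sub_left, intervalIntegral.integral_comp_sub_left,
          sub_self]
        simp only [sub_zero]
        congr 1
        linarith
    _ ≤ C * ∫ x in 0..t' - t, k x :=
        mul_le_mul_of_nonneg_left
          (sub_le_self _ (intervalIntegral.integral_nonneg htt' fun x _ => hk0 x)) C.coe_nonneg

lemma abs_laplaceConv_sub_le (hk0 : ∀ x, 0 ≤ k x) (hk_anti : AntitoneOn k (Ioi 0))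
    (hk : IntegrableOn k (Icc 0 T)) (hφ : IntegrableOn φ (Icc 0 T))
    (hφC : ∀ᵐ s ∂volume.restrict (Icc 0 T), |φ s| ≤ C) {t t' : ℝ} (ht : 0 ≤ t) (htt' : t ≤ t')
    (ht'T : t' ≤ T) :
    |laplaceConv k φ t' - laplaceConv k φ t| ≤ 2 * C * ∫ x in 0..t' - t, k x := by
  have h₁ := intervalIntegrable_kernel_mul hk hφ hφC le_rfl ht htt' ht'T
  have h₂ := intervalIntegrable_kernel_mul hk hφ hφC ht htt' le_rfl ht'T
  have h₃ := intervalIntegrable_kernel_mul hk hφ hφC le_rfl ht le_rfl (htt'.trans ht'T)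
  have hsplit : laplaceConv k φ t' - laplaceConv k φ t =
      (∫ s in 0..t, (k (t' - s) - k (t - s)) * φ s) + ∫ s in t..t', k (t' - s) * φ s := by
    simp only [laplaceConv, sub_mul]
    rw [← intervalIntegral.integral_add_adjacent_intervals h₁ h₂,
      intervalIntegral.integral_sub h₁ h₃]
    ring
  calc |laplaceConv k φ t' - laplaceConv k φ t|
      ≤ |∫ s in 0..t, (k (t' - s) - k (t - s)) * φ s| + |∫ s in t..t', k (t' - s) * φ s| := by
        rw [hsplit]; exact abs_add_le _ _
    _ ≤ C * (∫ x in 0..t' - t, k x) + C * ∫ x in 0..t' - t, k x :=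
        add_le_add (abs_integral_kernel_sub_mul_le hk0 hk_anti hk hφC ht htt' ht'T)
          (abs_integral_kernel_mul_le hk0 hk hφC ht htt' ht'T)
    _ = 2 * C * ∫ x in 0..t' - t, k x := by ring

theorem continuousOn_laplaceConv (hk0 : ∀ x, 0 ≤ k x) (hk_anti : AntitoneOn k (Ioi 0))
    (hk : IntegrableOn k (Icc 0 T)) (hφ : IntegrableOn φ (Icc 0 T))
    (hφC : ∀ᵐ s ∂volume.restrict (Icc 0 T), |φ s| ≤ C) :
    ContinuousOn (laplaceConv k φ) (Icc 0 T) := by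
  intro t ht
  have hprim : ContinuousOn (fun x => ∫ y in 0..x, k y) (Icc 0 T) := by
    rw [← uIcc_of_le (ht.1.trans ht.2)] at hk ⊢
    exact intervalIntegral.continuousOn_primitive_interval hk
  have hmaps : MapsTo (fun t' => |t' - t|) (Icc 0 T) (Icc 0 T) := fun t' ht' =>
    ⟨abs_nonneg _, abs_sub_le_iff.2 ⟨by linarith [ht.1, ht'.2], by linarith [ht.2, ht'.1]⟩⟩
  have hmodulus : Tendsto (fun t' => 2 * C * ∫ y in 0..|t' - t|, k y) (𝓝[Icc 0 T] t) (𝓝 0) := by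
    have := ((hprim.comp (by fun_prop : Continuous fun t' => |t' - t|).continuousOn hmaps) t
      ht).tendsto.const_mul (2 * (C : ℝ))
    simpa using this
  refine tendsto_iff_norm_sub_tendsto_zero.2 (squeeze_zero' (.of_forall fun _ => norm_nonneg _)
    (eventually_nhdsWithin_of_forall fun t' ht' => ?_) hmodulus)
  rw [Real.norm_eq_abs]
  rcases le_total t t' with h | h
  · rw [abs_of_nonneg (sub_nonneg.2 h)]
    exact abs_laplaceConv_sub_le hk0 hk_anti hk hφ hφC ht.1 h ht'.2
  · rw [abs_sub_comm, abs_sub_comm t', abs_of_nonneg (sub_nonneg.2 h)]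
    exact abs_laplaceConv_sub_le hk0 hk_anti hk hφ hφC ht'.1 h ht.2

end Continuity

theorem hasDerivWithinAt_integral_of_continuousOn {h : ℝ → ℝ} {a b t : ℝ}
    (hh : ContinuousOn h (Icc a b)) (ht : t ∈ Icc a b) :
    HasDerivWithinAt (fun τ => ∫ r in a..τ, h r) (h t) (Icc a b) t := by
  have : Fact (t ∈ Icc a b) := ⟨ht⟩
  exact intervalIntegral.integral_hasDerivWithinAt_right
    ((hh.mono (by rw [uIcc_of_le ht.1]; exact Icc_subset_Icc_right ht.2)).intervalIntegrable)
    (hh.stronglyMeasurableAtFilter_nhdsWithin measurableSet_Icc t) (hh t ht)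

theorem stmt_1_general (ν : Measure ℝ) (hν : IsLevyMeasure ν)
    (T : ℝ) (K : NNReal) (f f' : ℝ → ℝ)
    (hf'int : MeasureTheory.IntegrableOn f' (Set.Icc 0 T))
    (hf'bdd : ∀ᵐ t ∂(volume.restrict (Set.Icc (0:ℝ) T)), |f' t| ≤ K)
    (hfAC : ∀ t ∈ Set.Icc (0:ℝ) T, f t = f 0 + ∫ s in (0:ℝ)..t, f' s) :
    (∀ t ∈ Set.Icc (0:ℝ) T,
        HasDerivWithinAt (fun τ => ∫ s in (0:ℝ)..τ, nubar ν (τ - s) * (f s - f 0))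
          (∫ s in (0:ℝ)..t, nubar ν (t - s) * f' s) (Set.Icc 0 T) t)
      ∧ ContinuousOn (fun t => ∫ s in (0:ℝ)..t, nubar ν (t - s) * f' s)
          (Set.Icc 0 T) := by
  have hk := hν.integrableOn_nubar T
  have hcont : ContinuousOn (laplaceConv (nubar ν) f') (Icc 0 T) :=
    continuousOn_laplaceConv (nubar_nonneg ν) hν.antitoneOn_nubar hk hf'int hf'bdd
  have hprimitive : ∀ τ ∈ Icc 0 T,
      laplaceConv (nubar ν) (fun s => f s - f 0) τ = ∫ r in 0..τ, laplaceConv (nubar ν) f' r := by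
    intro τ hτ
    have hsub : Icc 0 τ ⊆ Icc 0 T := Icc_subset_Icc_right hτ.2
    rw [← laplaceConv_primitive_eq_integral_laplaceConv hτ.1 (hk.mono_set hsub)
      (hf'int.mono_set hsub)]
    refine intervalIntegral.integral_congr fun s hs => ?_
    rw [uIcc_of_le hτ.1] at hs
    simp only [hfAC s (hsub hs), add_sub_cancel_left]
  exact ⟨fun t ht => (hasDerivWithinAt_integral_of_continuousOn hcont ht).congr hprimitive
    (hprimitive t ht), hcont⟩

/-- for `f` Lipschitz on `[0,T]` (with a.e. derivative `f'`, essentially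
bounded), the function `g(t) = ∫_0^t ν̄(t-s)(f(s)-f(0)) ds` is differentiable at every
`t ∈ [0,T]` (in the sense of derivatives within `[0,T]`), with
`∂ₜ^Φ f (t) = ∫_0^t ν̄(t-s) f'(s) ds` for every `t ∈ [0,T]`, and
`t ↦ ∂ₜ^Φ f (t)` is continuous on `[0,T]`. -/
theorem stmt_1 (ν : Measure ℝ) (hν : IsLevyMeasure ν)
    (T : ℝ) (hT : 0 < T) (K : NNReal) (f f' : ℝ → ℝ)
    (hLip : LipschitzOnWith K f (Set.Icc 0 T))
    (hf'int : MeasureTheory.IntegrableOn f' (Set.Icc 0 T))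
    (hf'bdd : ∀ᵐ t ∂(volume.restrict (Set.Icc (0:ℝ) T)), |f' t| ≤ K)
    (hfAC : ∀ t ∈ Set.Icc (0:ℝ) T, f t = f 0 + ∫ s in (0:ℝ)..t, f' s) :
    (∀ t ∈ Set.Icc (0:ℝ) T,
        HasDerivWithinAt (fun τ => ∫ s in (0:ℝ)..τ, nubar ν (τ - s) * (f s - f 0))
          (∫ s in (0:ℝ)..t, nubar ν (t - s) * f' s) (Set.Icc 0 T) t)
      ∧ ContinuousOn (fun t => ∫ s in (0:ℝ)..t, nubar ν (t - s) * f' s)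
          (Set.Icc 0 T) :=
  stmt_1_general ν hν T K f f' hf'int hf'bdd hfAC
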